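/- arXiv:1110.0582 — 6 statements merged into one kernel-verified Lean document; each statement's English description precedes it below -/
import Mathlib

section
/- For the Budapest biquandle on a left module X over the quaternions ℍ, defined by a^b = j·a + (1+i)·b and a_b = −j·a + (1+i)·b, the map S(a,b) = (b^a, a_b) satisfies the set-theoretic Yang–Baxter equation S₁S₂S₁ = S₂S₁S₂. -/
/-!
The Budapest switch is linear: `S(a, b) = ((1 + i)•a + j•b, -j•a + (1 + i)•b)`. For a linear switch
`S(a, b) = (α•a + β•b, γ•a + δ•b)` with coefficients in an arbitrary (noncommutative) ring, both
sides of the Yang–Baxter equation are linear in `(a, b, c)`, and comparing coefficients reduces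
it to seven identities between `α, β, γ, δ`. For `α = δ = 1 + i`, `β = -γ = j` these identities
follow from `i² = j² = -1` and `ji = -ij` alone.
-/

/-- Each field is named after the component of `S₁S₂S₁ = S₂S₁S₂` and the variable whose
coefficients it compares; the remaining coefficients agree in every ring. -/
structure IsYangBaxterCoeffs {R : Type*} [Ring R] (α β γ δ : R) : Prop where
  fst_a : α * α + β * α * γ = α
  fst_b : α * β + β * α * δ = β * α
  snd_a : γ * α + δ * α * γ = α * γ
  snd_b : γ * β + δ * α * δ = α * δ * α + β * γ
  snd_c : δ * β = α * δ * β + β * δ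
  thd_b : γ * δ = γ * δ * α + δ * γ
  thd_c : δ = γ * δ * β + δ * δ

theorem IsYangBaxterCoeffs.yangBaxter {R X : Type*} [Ring R] [AddCommGroup X] [Module R X]
    {α β γ δ : R} (h : IsYangBaxterCoeffs α β γ δ) (S₁ S₂ : X × X × X → X × X × X)
    (hS₁ : ∀ a b c : X, S₁ (a, b, c) = (α • a + β • b, γ • a + δ • b, c))
    (hS₂ : ∀ a b c : X, S₂ (a, b, c) = (a, α • b + β • c, γ • b + δ • c)) :
    S₁ ∘ S₂ ∘ S₁ = S₂ ∘ S₁ ∘ S₂ := by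
  obtain ⟨h₁, h₂, h₃, h₄, h₅, h₆, h₇⟩ := h
  funext ⟨a, b, c⟩
  simp only [Function.comp_apply, hS₁, hS₂, Prod.mk.injEq]
  refine ⟨?_, ?_, ?_⟩ <;> match_scalars <;> simp only [mul_one, ← mul_assoc] <;> assumption

theorem isYangBaxterCoeffs_budapest {A : Type*} [Ring A] {i j : A}
    (hii : i * i = -1) (hjj : j * j = -1) (hji : j * i = -(i * j)) :
    IsYangBaxterCoeffs (1 + i) j (-j) (1 + i) := by
  have hii' (x : A) : i * (i * x) = -x := by rw [← mul_assoc, hii, neg_one_mul]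
  constructor <;>
    simp only [mul_add, add_mul, mul_neg, neg_mul, one_mul, mul_one, neg_neg, mul_assoc,
      hii, hjj, hji, hii'] <;>
    abel

open Quaternion in
theorem Quaternion.i_j_relations {R : Type*} [CommRing R] {i j : ℍ[R]}
    (hi : i = ⟨0, 1, 0, 0⟩) (hj : j = ⟨0, 0, 1, 0⟩) :
    i * i = -1 ∧ j * j = -1 ∧ j * i = -(i * j) := by
  refine ⟨?_, ?_, ?_⟩ <;> ext <;> simp <;> simp [hi, hj]

/-- The Budapest biquandle `a^b = j·a + (1+i)·b`, `a_b = -j·a + (1+i)·b` on a left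
module `X` over the quaternions `ℍ` satisfies the set-theoretic Yang–Baxter equation
`S₁S₂S₁ = S₂S₁S₂`. -/
theorem stmt3 {X : Type*} [AddCommGroup X] [Module (Quaternion ℝ) X]
    (i j : Quaternion ℝ) (hi : i = ⟨0, 1, 0, 0⟩) (hj : j = ⟨0, 0, 1, 0⟩)
    (up down : X → X → X)
    (hup : ∀ a b : X, up a b = j • a + (1 + i) • b)
    (hdown : ∀ a b : X, down a b = -(j • a) + (1 + i) • b)
    (S₁ S₂ : X × X × X → X × X × X)
    (hS₁ : ∀ a b c : X, S₁ (a, b, c) = (up b a, down a b, c))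
    (hS₂ : ∀ a b c : X, S₂ (a, b, c) = (a, up c b, down b c)) :
    S₁ ∘ S₂ ∘ S₁ = S₂ ∘ S₁ ∘ S₂ := by
  obtain ⟨hii, hjj, hji⟩ := Quaternion.i_j_relations hi hj
  refine (isYangBaxterCoeffs_budapest hii hjj hji).yangBaxter S₁ S₂ ?_ ?_
  · intro a b c
    rw [hS₁, hup, hdown, add_comm (j • b), neg_smul]
  · intro a b c
    rw [hS₂, hup, hdown, add_comm (j • c), neg_smul]
end

section
/- For the black-and-white biquandle BQ²₁ = {b, w}, the second birack homology group H₂^{BR} is isomorphic to ℤ ⊕ ℤ. -/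
private lemma sm {α : Type*} (p : α) (n : ℤ) :
    (Finsupp.single p n : α →₀ ℤ) = n • Finsupp.single p 1 := by
  rw [Finsupp.smul_single, smul_eq_mul, mul_one]

private lemma decomp (f : (Bool × Bool) →₀ ℤ) :
    f = Finsupp.single (false, false) (f (false, false))
      + Finsupp.single (false, true) (f (false, true))
      + Finsupp.single (true, false) (f (true, false))
      + Finsupp.single (true, true) (f (true, true)) := by
  ext ⟨x, y⟩
  cases x <;> cases y <;> simp [Finsupp.single_apply]

/-- For the black-and-white biquandle `BQ²₁ = {b, w}` (modelled as `Bool`, both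
operations the swap `x ↦ !x`), the second birack homology group `H₂^{BR} = ker ∂₂ / im ∂₃`
is `ℤ ⊕ ℤ`. The boundary maps on the free abelian groups of tuples are determined on
generators by the birack boundary formula: `∂₂(x₁,x₂) = (x₁) - (x₁^{x₂})` and
`∂₃(x₁,x₂,x₃) = [(x₁,x₃) - (x₁^{x₂}, x₃_{x₂})] - [(x₁,x₂) - (x₁^{x₃}, x₂^{x₃})]`. -/
theorem stmt11
    (d2 : ((Bool × Bool) →₀ ℤ) →+ (Bool →₀ ℤ))
    (d3 : ((Bool × Bool × Bool) →₀ ℤ) →+ ((Bool × Bool) →₀ ℤ))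
    (hd2 : ∀ p : Bool × Bool,
      d2 (Finsupp.single p 1) = Finsupp.single p.1 1 - Finsupp.single (!p.1) 1)
    (hd3 : ∀ t : Bool × Bool × Bool,
      d3 (Finsupp.single t 1) =
        (Finsupp.single (t.1, t.2.2) 1 - Finsupp.single (!t.1, !t.2.2) 1)
          - (Finsupp.single (t.1, t.2.1) 1 - Finsupp.single (!t.1, !t.2.1) 1)) :
    Nonempty ((d2.ker ⧸ d3.range.addSubgroupOf d2.ker) ≃+ ℤ × ℤ) := by
  have d2s : ∀ (p : Bool × Bool) (n : ℤ), d2 (Finsupp.single p n)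
      = n • (Finsupp.single p.1 1 - Finsupp.single (!p.1) 1) := by
    intro p n; rw [sm, map_zsmul, hd2]
  have d3s : ∀ (t : Bool × Bool × Bool) (n : ℤ), d3 (Finsupp.single t n)
      = n • ((Finsupp.single (t.1, t.2.2) 1 - Finsupp.single (!t.1, !t.2.2) 1)
          - (Finsupp.single (t.1, t.2.1) 1 - Finsupp.single (!t.1, !t.2.1) 1)) := by
    intro t n; rw [sm, map_zsmul, hd3]
  -- the map ψ f = (f(ff)+f(ft), f(ft)+f(tf))
  set ψ : ((Bool × Bool) →₀ ℤ) →+ ℤ × ℤ :=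
    AddMonoidHom.prod
      (Finsupp.applyAddHom ((false, false) : Bool × Bool)
        + Finsupp.applyAddHom ((false, true) : Bool × Bool))
      (Finsupp.applyAddHom ((false, true) : Bool × Bool)
        + Finsupp.applyAddHom ((true, false) : Bool × Bool)) with hψ
  have ψapp : ∀ f : (Bool × Bool) →₀ ℤ,
      ψ f = (f (false, false) + f (false, true), f (false, true) + f (true, false)) := by
    intro f; rfl
  set φ : d2.ker →+ ℤ × ℤ := ψ.comp d2.ker.subtype with hφ
  -- φ is surjective
  have hsurj : Function.Surjective φ := by
    rintro ⟨s, t⟩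
    set g : (Bool × Bool) →₀ ℤ :=
      Finsupp.single (false, false) s + Finsupp.single (true, false) t
        + Finsupp.single (true, true) (s - t) with hg
    have hgker : g ∈ d2.ker := by
      rw [AddMonoidHom.mem_ker, hg, map_add, map_add, d2s, d2s, d2s]
      simp only [Bool.not_false, Bool.not_true]
      module
    refine ⟨⟨g, hgker⟩, ?_⟩
    show ψ g = (s, t)
    rw [ψapp]
    simp [hg, Finsupp.single_apply]
  -- the subgroup im d3 (inside ker d2) equals ker φ
  have hker : d3.range.addSubgroupOf d2.ker = φ.ker := by
    ext ⟨f, hf⟩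
    rw [AddSubgroup.mem_addSubgroupOf, AddMonoidHom.mem_ker]
    constructor
    · rintro ⟨x, hx⟩
      have hx' : d3 x = f := hx
      have hz : ψ.comp d3 = 0 := by
        refine Finsupp.addHom_ext fun t n => ?_
        rw [AddMonoidHom.comp_apply, d3s, map_zsmul]
        obtain ⟨a, b, c⟩ := t
        cases a <;> cases b <;> cases c <;>
          simp [ψapp, Finsupp.single_apply, Prod.ext_iff]
      show ψ f = 0
      rw [← hx', ← AddMonoidHom.comp_apply, hz, AddMonoidHom.zero_apply]
    · intro h
      have h' : ψ f = 0 := h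
      rw [ψapp, Prod.mk_eq_zero] at h'
      obtain ⟨h1, h2⟩ := h'
      have hf0 : d2 f = 0 := hf
      have hD : d2 f = (f (false, false) + f (false, true) - f (true, false) - f (true, true))
          • (Finsupp.single false (1:ℤ) - Finsupp.single true 1) := by
        conv_lhs => rw [decomp f]
        rw [map_add, map_add, map_add, d2s, d2s, d2s, d2s]
        simp only [Bool.not_false, Bool.not_true]
        module
      rw [hf0] at hD
      have h3 : f (false, false) + f (false, true) - f (true, false) - f (true, true) = 0 := by
        have := DFunLike.congr_fun hD false
        simpa [Finsupp.single_apply] using this.symm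
      have hb : f (false, true) = -(f (false, false)) := by linarith
      have hc : f (true, false) = f (false, false) := by linarith
      have hd : f (true, true) = -(f (false, false)) := by linarith
      have key : f = d3 (Finsupp.single (false, false, true) (-(f (false, false)))) := by
        rw [d3s]
        conv_lhs => rw [decomp f]
        rw [hb, hc, hd, sm ((false, false) : Bool × Bool) (f (false, false)),
          sm ((false, true) : Bool × Bool) (-(f (false, false))),
          sm ((true, false) : Bool × Bool) (f (false, false)),
          sm ((true, true) : Bool × Bool) (-(f (false, false)))]
        simp only [Bool.not_false, Bool.not_true]
        module
      exact ⟨_, key.symm⟩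
  rw [hker]
  exact ⟨QuotientAddGroup.quotientKerEquivOfSurjective φ hsurj⟩
end

section
/- Let X be a birack. Define the double on pairs: for pairs (a,b) and (a^b, c) with a, b, c ∈ X, set (a,b)^{(a^b,c)} = (a^{c_b}, b^c) and (a^b,c)_{(a,b)} = (a, c_b). Then the doubled operations again satisfy the Yang–Baxter relations: for all a, b, c in X, following a triple of composable pairs through both sides of the doubled Reidemeister III move yields equal results, as a consequence of the birack relations a^{c_b b^c} = a^{bc}, (a^b)_{c^{b_a}} = (a_c)^{b_{c^a}}, and a_{c^b b_c} = a_{bc} in X. -/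
/-- The double of a birack `X`: on pairs, `(a,b)^{(a^b,c)} = (a^{c_b}, b^c)` and
`(a^b,c)_{(a,b)} = (a, c_b)`. Here `U p q = p^q` and `D q p = q_p` are given by the
total formulas `U p q = (p₁^{(q₂)_{p₂}}, p₂^{q₂})`, `D q p = (p₁, (q₂)_{p₂})`, which agree
with the defining formulas on the composable set `Y`. If `X` is a birack (invertible
`S(a,b) = (b^a, a_b)` satisfying the Yang–Baxter relations), then following a triple
of composable pairs `P = (a,b)`, `Q = (a^b, c)`, `R = ((a^b)^c, d)` through both sides
of the doubled Reidemeister III move yields equal results, i.e. the doubled operations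
satisfy the three Yang–Baxter relations. -/
theorem stmt12 {X : Type*} (up down : X → X → X)
    (hSbij : Function.Bijective fun p : X × X => (up p.2 p.1, down p.1 p.2))
    (hr1 : ∀ a b c : X, up (up a b) c = up (up a (down c b)) (up b c))
    (hr2 : ∀ a b c : X,
      down (up a b) (up c (down b a)) = up (down a c) (down b (up c a)))
    (hr3 : ∀ a b c : X, down (down a b) c = down (down a (up c b)) (down b c))
    (U D : X × X → X × X → X × X)
    (hU : ∀ p q : X × X, U p q = (up p.1 (down q.2 p.2), up p.2 q.2))
    (hD : ∀ q p : X × X, D q p = (p.1, down q.2 p.2)) :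
    ∀ a b c d : X, ∀ P Q R : X × X,
      P = (a, b) → Q = (up a b, c) → R = (up (up a b) c, d) →
        U (U P Q) R = U (U P (D R Q)) (U Q R) ∧
        D (U P Q) (U R (D Q P)) = U (D P R) (D Q (U R P)) ∧
        D (D P Q) R = D (D P (U R Q)) (D Q R) := by
  intro a b c d P Q R hP hQ hR
  subst hP hQ hR
  simp only [hU, hD, Prod.mk.injEq]
  refine ⟨⟨?_, hr1 b c d⟩, ⟨?_, hr2 b c d⟩, trivial, hr3 b c d⟩
  · rw [hr2 c d b, hr3 d c b, ← hr1 a (down c b) (down d (up b c))]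
  · rw [hr3 c b d]
end

section
/- Let X be a rack and let A be the abelian group generated by symbols (x,y,z) for x,y,z ∈ X, subject to the relations: (a) (x,y,y) = 0, (x,x,x) = 0 and (x,x,y) = 0 for all x,y; and (b) for all x,y,z, the Reidemeister III relation as derived from the rack 3-cycle condition. In the case X is the 3-colour quandle (the set {r,g,b} with a^b = a if a = b, and a^b = the third colour if a ≠ b), the element (a,b,c) + (a,c,a), for {a,b,c} = {r,g,b}, has order dividing 3 in the third quandle homology group H₃^Q(X). -/
set_option maxHeartbeats 1000000


/-- In the 3-colour quandle `R₃` (modelled as `ZMod 3`; `a^b = a` if `a = b`, and the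
third colour otherwise — characterized by `hup`), the element `(a,b,c) + (a,c,a)` (for
`a,b,c` a permutation of the three colours) has order dividing 3 in the third quandle
homology `H₃^Q`: it is a cycle in the quandle complex (its rack boundary is degenerate),
and 3 times it is, modulo degenerate chains, a rack boundary `∂₄(u)`. The rack boundary
maps `∂₃`, `∂₄` are determined on generators by the rack boundary formula, and the
degenerate subgroups `D₂`, `D₃` are generated by tuples with two consecutive equal
entries. -/
theorem stmt14
    (up : ZMod 3 → ZMod 3 → ZMod 3)
    (hup : ∀ a b : ZMod 3,
      (a = b → up a b = a) ∧ (a ≠ b → up a b ≠ a ∧ up a b ≠ b))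
    (d3 : ((ZMod 3 × ZMod 3 × ZMod 3) →₀ ℤ) →+ ((ZMod 3 × ZMod 3) →₀ ℤ))
    (hd3 : ∀ t : ZMod 3 × ZMod 3 × ZMod 3,
      d3 (Finsupp.single t 1) =
        Finsupp.single (t.1, t.2.2) 1 - Finsupp.single (up t.1 t.2.1, t.2.2) 1
          - Finsupp.single (t.1, t.2.1) 1
          + Finsupp.single (up t.1 t.2.2, up t.2.1 t.2.2) 1)
    (d4 : ((ZMod 3 × ZMod 3 × ZMod 3 × ZMod 3) →₀ ℤ) →+
      ((ZMod 3 × ZMod 3 × ZMod 3) →₀ ℤ))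
    (hd4 : ∀ t : ZMod 3 × ZMod 3 × ZMod 3 × ZMod 3,
      d4 (Finsupp.single t 1) =
        (Finsupp.single (t.1, t.2.2.1, t.2.2.2) 1
            - Finsupp.single (up t.1 t.2.1, t.2.2.1, t.2.2.2) 1)
          - (Finsupp.single (t.1, t.2.1, t.2.2.2) 1
            - Finsupp.single (up t.1 t.2.2.1, up t.2.1 t.2.2.1, t.2.2.2) 1)
          + (Finsupp.single (t.1, t.2.1, t.2.2.1) 1
            - Finsupp.single
                (up t.1 t.2.2.2, up t.2.1 t.2.2.2, up t.2.2.1 t.2.2.2) 1))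
    (D2 : AddSubgroup ((ZMod 3 × ZMod 3) →₀ ℤ))
    (hD2 : D2 = AddSubgroup.closure {f | ∃ x : ZMod 3, f = Finsupp.single (x, x) 1})
    (D3 : AddSubgroup ((ZMod 3 × ZMod 3 × ZMod 3) →₀ ℤ))
    (hD3 : D3 = AddSubgroup.closure
      {f | ∃ x y z : ZMod 3, (x = y ∨ y = z) ∧ f = Finsupp.single (x, y, z) 1})
    (a b c : ZMod 3) (hab : a ≠ b) (hbc : b ≠ c) (hac : a ≠ c) :
    d3 (Finsupp.single (a, b, c) 1 + Finsupp.single (a, c, a) 1) ∈ D2 ∧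
    ∃ u : (ZMod 3 × ZMod 3 × ZMod 3 × ZMod 3) →₀ ℤ,
      (3 : ℤ) • (Finsupp.single (a, b, c) 1 + Finsupp.single (a, c, a) 1)
        - d4 u ∈ D3 := by
  have third' : ∀ (x y z w : ZMod 3),
      x = y ∨ z = x ∨ z = y ∨ w = x ∨ w = y ∨ z = w := by decide
  have third : ∀ (x y z w : ZMod 3),
      x ≠ y → z ≠ x → z ≠ y → w ≠ x → w ≠ y → z = w := fun x y z w h1 h2 h3 h4 h5 =>
    ((((((third' x y z w).resolve_left h1).resolve_left h2).resolve_left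
      h3).resolve_left h4).resolve_left h5)
  have huaa : up a a = a := (hup a a).1 rfl
  have hubb : up b b = b := (hup b b).1 rfl
  have hucc : up c c = c := (hup c c).1 rfl
  have huab : up a b = c := by
    obtain ⟨h1, h2⟩ := (hup a b).2 hab
    exact third a b _ c hab h1 h2 (Ne.symm hac) (Ne.symm hbc)
  have huba : up b a = c := by
    obtain ⟨h1, h2⟩ := (hup b a).2 hab.symm
    exact third b a _ c hab.symm h1 h2 (Ne.symm hbc) (Ne.symm hac)
  have huac : up a c = b := by
    obtain ⟨h1, h2⟩ := (hup a c).2 hac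
    exact third a c _ b hac h1 h2 (Ne.symm hab) hbc
  have huca : up c a = b := by
    obtain ⟨h1, h2⟩ := (hup c a).2 hac.symm
    exact third c a _ b hac.symm h1 h2 hbc (Ne.symm hab)
  have hubc : up b c = a := by
    obtain ⟨h1, h2⟩ := (hup b c).2 hbc
    exact third b c _ a hbc h1 h2 hab hac
  have hucb : up c b = a := by
    obtain ⟨h1, h2⟩ := (hup c b).2 hbc.symm
    exact third c b _ a hbc.symm h1 h2 hac hab
  constructor
  · rw [map_add, hD2]
    simp only [hd3]
    simp only [huaa, huab, huac, huca, hubc]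
    have hmem : Finsupp.single (a, a) (1 : ℤ) - Finsupp.single (c, c) 1 ∈
        AddSubgroup.closure {f : (ZMod 3 × ZMod 3) →₀ ℤ |
          ∃ x : ZMod 3, f = Finsupp.single (x, x) 1} :=
      sub_mem (AddSubgroup.subset_closure ⟨a, rfl⟩)
        (AddSubgroup.subset_closure ⟨c, rfl⟩)
    convert hmem using 1
    abel
  · refine ⟨Finsupp.single (a, b, a, b) 1 + Finsupp.single (a, b, c, a) 1
      + Finsupp.single (a, b, c, a) 1 + Finsupp.single (a, b, c, b) 1
      - Finsupp.single (b, a, b, c) 1 + Finsupp.single (c, a, b, a) 1, ?_⟩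
    rw [hD3]
    simp only [map_add, map_sub, hd4]
    simp only [huaa, hubb, hucc, huab, huba, huac, huca, hubc, hucb]
    have g : ∀ x y z : ZMod 3, (x = y ∨ y = z) →
        Finsupp.single (x, y, z) (1 : ℤ) ∈
          AddSubgroup.closure {f : (ZMod 3 × ZMod 3 × ZMod 3) →₀ ℤ |
            ∃ x y z : ZMod 3, (x = y ∨ y = z) ∧ f = Finsupp.single (x, y, z) 1} :=
      fun x y z h => AddSubgroup.subset_closure ⟨x, y, z, h, rfl⟩
    have hmem : -Finsupp.single (a, a, b) (1 : ℤ)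
        + Finsupp.single (a, b, b) 1 + Finsupp.single (a, b, b) 1
        + Finsupp.single (c, c, a) 1 + Finsupp.single (c, c, a) 1
        - Finsupp.single (b, a, a) 1 - Finsupp.single (b, a, a) 1
        + Finsupp.single (c, c, b) 1 + Finsupp.single (b, b, c) 1
        + Finsupp.single (b, c, c) 1 + Finsupp.single (b, b, a) 1
        + Finsupp.single (c, a, a) 1 ∈
          AddSubgroup.closure {f : (ZMod 3 × ZMod 3 × ZMod 3) →₀ ℤ |
            ∃ x y z : ZMod 3, (x = y ∨ y = z) ∧ f = Finsupp.single (x, y, z) 1} := by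
      exact add_mem (add_mem (add_mem (add_mem (add_mem (sub_mem (sub_mem
        (add_mem (add_mem (add_mem (add_mem (neg_mem (g a a b (Or.inl rfl)))
          (g a b b (Or.inr rfl))) (g a b b (Or.inr rfl)))
          (g c c a (Or.inl rfl))) (g c c a (Or.inl rfl)))
          (g b a a (Or.inr rfl))) (g b a a (Or.inr rfl)))
          (g c c b (Or.inl rfl))) (g b b c (Or.inl rfl)))
          (g b c c (Or.inr rfl))) (g b b a (Or.inl rfl)))
          (g c a a (Or.inr rfl))
    convert hmem using 1
    abel
end

section
/- For the 3-colour quandle R₃ = {r,g,b} (with a^b = a if a = b and a^b = the third colour otherwise), the chain c = (a,b,c) + (a,c,a) (where a,b,c is a permutation of r,g,b) is a 3-cycle in the quandle chain complex: ∂₃(c) ∈ C₂^D(R₃), i.e. its rack boundary is a sum of degenerate 2-chains. -/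
lemma third_eq : ∀ x a b c : ZMod 3, a ≠ b → b ≠ c → a ≠ c → x ≠ a → x ≠ b → x = c := by
  decide

/-- For the 3-colour quandle `R₃` (modelled as `ZMod 3`; `a^b = a` if `a = b`, the third
colour otherwise), the chain `(a,b,c) + (a,c,a)` (with `a,b,c` a permutation of the three
colours) is a cycle in the quandle chain complex: its rack boundary
`∂₃(x,y,z) = (x,z) - (x^y, z) - (x,y) + (x^z, y^z)` lies in the degenerate subgroup
`C₂^D` spanned by pairs `(x,x)`. -/
theorem stmt15
    (up : ZMod 3 → ZMod 3 → ZMod 3)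
    (hup : ∀ a b : ZMod 3,
      (a = b → up a b = a) ∧ (a ≠ b → up a b ≠ a ∧ up a b ≠ b))
    (d3 : ((ZMod 3 × ZMod 3 × ZMod 3) →₀ ℤ) →+ ((ZMod 3 × ZMod 3) →₀ ℤ))
    (hd3 : ∀ t : ZMod 3 × ZMod 3 × ZMod 3,
      d3 (Finsupp.single t 1) =
        Finsupp.single (t.1, t.2.2) 1 - Finsupp.single (up t.1 t.2.1, t.2.2) 1
          - Finsupp.single (t.1, t.2.1) 1
          + Finsupp.single (up t.1 t.2.2, up t.2.1 t.2.2) 1)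
    (D2 : AddSubgroup ((ZMod 3 × ZMod 3) →₀ ℤ))
    (hD2 : D2 = AddSubgroup.closure {f | ∃ x : ZMod 3, f = Finsupp.single (x, x) 1})
    (a b c : ZMod 3) (hab : a ≠ b) (hbc : b ≠ c) (hac : a ≠ c) :
    d3 (Finsupp.single (a, b, c) 1 + Finsupp.single (a, c, a) 1) ∈ D2 := by
  have hupab : up a b = c :=
    third_eq _ a b c hab hbc hac ((hup a b).2 hab).1 ((hup a b).2 hab).2
  have hupac : up a c = b :=
    third_eq _ a c b hac hbc.symm hab ((hup a c).2 hac).1 ((hup a c).2 hac).2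
  have hupbc : up b c = a :=
    third_eq _ b c a hbc hac.symm hab.symm ((hup b c).2 hbc).1 ((hup b c).2 hbc).2
  have hupca : up c a = b :=
    third_eq _ c a b hac.symm hab hbc.symm ((hup c a).2 hac.symm.symm.symm).1
      ((hup c a).2 (Ne.symm hac)).2
  have hupaa : up a a = a := (hup a a).1 rfl
  rw [map_add, hd3, hd3]
  simp only [hupab, hupac, hupbc, hupca, hupaa]
  have : (Finsupp.single (a, c) 1 - Finsupp.single (c, c) 1 - Finsupp.single (a, b) 1
      + Finsupp.single (b, a) 1)
      + (Finsupp.single (a, a) 1 - Finsupp.single (b, a) 1 - Finsupp.single (a, c) 1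
      + Finsupp.single (a, b) (1:ℤ))
      = Finsupp.single (a, a) 1 - Finsupp.single (c, c) 1 := by abel
  rw [this, hD2]
  exact sub_mem (AddSubgroup.subset_closure ⟨a, rfl⟩)
    (AddSubgroup.subset_closure ⟨c, rfl⟩)
end

section
/- Let D be a chord diagram on n circles in which interior chords join a circle to itself and exterior chords join distinct circles, and suppose each circle meets an even number of exterior chord endpoints (so the underlying virtual diagram admits an alternating orientation). Assign to each chord endpoint a sign alternating around each circle; classify each chord (crossing) as a sink if the induced orientations converge at it, a source if they diverge, and a saddle otherwise. Then the number of sinks equals the number of sources. -/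
/-!
Shifting every endpoint one step along its circle swaps the two signs, so there are as many
`true` endpoints as `false` ones. The chord involution exchanges the `true`–`false` endpoints
with the `false`–`true` ones, so removing these mixed endpoints from both counts leaves as many
sink endpoints as source endpoints.
-/

theorem Nat.card_subtype_and_add_card_subtype_and_not {α : Type*} [Finite α] (p q : α → Prop) :
    Nat.card {a // p a ∧ q a} + Nat.card {a // p a ∧ ¬q a} = Nat.card {a // p a} := by
  classical
  have := Fintype.ofFinite α
  simp only [Nat.card_eq_fintype_card, Fintype.card_subtype, ← Finset.filter_filter]
  exact Finset.card_filter_add_card_filter_not _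

theorem Function.Involutive.card_both_eq_card_neither {α : Type*} [Finite α] {m : α → α}
    (hm : Function.Involutive m) (s : α → Bool)
    (hs : Nat.card {a // s a = true} = Nat.card {a // s a = false}) :
    Nat.card {a // s a = true ∧ s (m a) = true} =
      Nat.card {a // s a = false ∧ s (m a) = false} := by
  have hmixed : Nat.card {a // s a = true ∧ s (m a) = false} =
      Nat.card {a // s a = false ∧ s (m a) = true} :=
    Nat.card_congr <| hm.toPerm.subtypeEquiv fun a => by simp [hm a, and_comm]
  have htrue := Nat.card_subtype_and_add_card_subtype_and_not
    (fun a => s a = true) (fun a => s (m a) = true)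
  have hfalse := Nat.card_subtype_and_add_card_subtype_and_not
    (fun a => s a = false) (fun a => s (m a) = false)
  simp only [Bool.not_eq_true, Bool.not_eq_false] at htrue hfalse
  omega

theorem card_true_eq_card_false_of_alternating {ι : Type*} {N : ι → ℕ}
    (s : (Σ c, ZMod (N c)) → Bool) (halt : ∀ c (i : ZMod (N c)), s ⟨c, i + 1⟩ = !s ⟨c, i⟩) :
    Nat.card {e // s e = true} = Nat.card {e // s e = false} :=
  Nat.card_congr <| (Equiv.sigmaCongrRight fun c => Equiv.addRight 1).subtypeEquiv
    fun e => by simp [Equiv.sigmaCongrRight, halt]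

theorem stmt18_general {n : ℕ} (N : Fin n → ℕ) (hN : ∀ c, 0 < N c)
    (m : (Σ c : Fin n, ZMod (N c)) → (Σ c : Fin n, ZMod (N c)))
    (hm_inv : ∀ e, m (m e) = e)
    (s : (Σ c : Fin n, ZMod (N c)) → Bool)
    (halt : ∀ (c : Fin n) (i : ZMod (N c)), s ⟨c, i + 1⟩ = !s ⟨c, i⟩) :
    Nat.card {e : Σ c : Fin n, ZMod (N c) // s e = true ∧ s (m e) = true} =
      Nat.card {e : Σ c : Fin n, ZMod (N c) // s e = false ∧ s (m e) = false} := by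
  have : ∀ c, NeZero (N c) := fun c => ⟨(hN c).ne'⟩
  exact Function.Involutive.card_both_eq_card_neither hm_inv s
    (card_true_eq_card_false_of_alternating s halt)

/-- Chord diagrams and sinks = sources. The diagram has `n` circles; circle `c` carries
`N c > 0` chord endpoints, cyclically indexed by `ZMod (N c)`. The chords are encoded by
a fixed-point-free involution `m` on the set of endpoints (an interior chord joins a
circle to itself, an exterior chord joins distinct circles); each circle meets an even
number of exterior chord endpoints. Each endpoint carries a sign `s` which alternates
around each circle (the alternating orientation). A chord (crossing) is a sink if the
orientations converge at it (both endpoint signs `true`), a source if they diverge (both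
`false`), and a saddle otherwise. Counting endpoints (each chord contributes its two
endpoints), the number of sinks equals the number of sources. -/
theorem stmt18 {n : ℕ} (N : Fin n → ℕ) (hN : ∀ c, 0 < N c)
    (m : (Σ c : Fin n, ZMod (N c)) → (Σ c : Fin n, ZMod (N c)))
    (hm_inv : ∀ e, m (m e) = e) (hm_ne : ∀ e, m e ≠ e)
    (hext_even : ∀ c : Fin n, Even (Nat.card {i : ZMod (N c) // (m ⟨c, i⟩).1 ≠ c}))
    (s : (Σ c : Fin n, ZMod (N c)) → Bool)
    (halt : ∀ (c : Fin n) (i : ZMod (N c)), s ⟨c, i + 1⟩ = !s ⟨c, i⟩) :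
    Nat.card {e : Σ c : Fin n, ZMod (N c) // s e = true ∧ s (m e) = true} =
      Nat.card {e : Σ c : Fin n, ZMod (N c) // s e = false ∧ s (m e) = false} :=
  stmt18_general N hN m hm_inv s halt
end
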